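/- Inclusion logic satisfies the locality property: if X and Y are teams of M whose restrictions to the free variables of φ coincide, i.e., X↾Fv(φ) = Y↾Fv(φ), then M ⊨_X φ if and only if M ⊨_Y φ. -/

import Mathlib

/-!
Induction on `φ`, reading `X ↾ Fv(φ) = Y ↾ Fv(φ)` as: every assignment of either team
agrees on `Fv(φ)` with some assignment of the other. For a split `X = X₁ ∪ X₂` witnessing a
disjunction, `Y` is split into the assignments agreeing on `Fv(φ₁)` with one of `X₁`, resp. on
`Fv(φ₂)` with one of `X₂`. For `∃x`, an assignment `t ∈ Y` receives the union of the witness sets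
of all `s ∈ X` agreeing with `t` on the relevant variables; the lax semantics is what allows
this union.
-/

namespace TeamSem

variable {M : Type}

/-- A team is a set of assignments (variables are natural numbers). -/
abbrev Team (M : Type) := Set (ℕ → M)

/-- Lax existential extension of a team `X` along variable `x` by a choice function `F`. -/
def extT (X : Team M) (x : ℕ) (F : (ℕ → M) → Set M) : Team M :=
  {t | ∃ s ∈ X, ∃ a ∈ F s, t = Function.update s x a}

/-- Universal extension of a team `X` along variable `x`. -/
def extAll (X : Team M) (x : ℕ) : Team M :=
  {t | ∃ s ∈ X, ∃ a : M, t = Function.update s x a}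

/-- First-order formulas with semantic atoms depending on a finite list of variables. -/
inductive FOForm (M : Type) where
  | atom : List ℕ → (List M → Prop) → FOForm M
  | neg  : FOForm M → FOForm M
  | and  : FOForm M → FOForm M → FOForm M
  | or   : FOForm M → FOForm M → FOForm M
  | ex   : ℕ → FOForm M → FOForm M
  | all  : ℕ → FOForm M → FOForm M

/-- Tarskian (single-assignment) satisfaction for first-order formulas. -/
def FOForm.sat : FOForm M → (ℕ → M) → Prop
  | .atom l p, s => p (l.map s)
  | .neg φ, s => ¬ FOForm.sat φ s
  | .and φ ψ, s => FOForm.sat φ s ∧ FOForm.sat ψ s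
  | .or φ ψ, s => FOForm.sat φ s ∨ FOForm.sat ψ s
  | .ex x φ, s => ∃ a : M, FOForm.sat φ (Function.update s x a)
  | .all x φ, s => ∀ a : M, FOForm.sat φ (Function.update s x a)

/-- Free variables of a first-order formula. -/
def FOForm.fv : FOForm M → Set ℕ
  | .atom l _ => {v | v ∈ l}
  | .neg φ => FOForm.fv φ
  | .and φ ψ => FOForm.fv φ ∪ FOForm.fv ψ
  | .or φ ψ => FOForm.fv φ ∪ FOForm.fv ψ
  | .ex x φ => FOForm.fv φ \ {x}
  | .all x φ => FOForm.fv φ \ {x}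

/-- Formulas of inclusion logic: first-order formulas (with negation applied
only to first-order formulas), inclusion atoms, ∧, ∨, ∃, ∀. -/
inductive IncForm (M : Type) where
  | fo   : FOForm M → IncForm M
  | incl : List ℕ → List ℕ → IncForm M
  | and  : IncForm M → IncForm M → IncForm M
  | or   : IncForm M → IncForm M → IncForm M
  | ex   : ℕ → IncForm M → IncForm M
  | all  : ℕ → IncForm M → IncForm M

/-- Lax team semantics for inclusion logic. -/
def IncForm.tsat : IncForm M → Team M → Prop
  | .fo α, X => ∀ s ∈ X, FOForm.sat α s
  | .incl xs ys, X => ∀ s ∈ X, ∃ s' ∈ X, xs.map s = ys.map s'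
  | .and φ ψ, X => IncForm.tsat φ X ∧ IncForm.tsat ψ X
  | .or φ ψ, X => ∃ Y Z : Team M, X = Y ∪ Z ∧ IncForm.tsat φ Y ∧ IncForm.tsat ψ Z
  | .ex x φ, X => ∃ F : (ℕ → M) → Set M, (∀ s ∈ X, (F s).Nonempty) ∧
      IncForm.tsat φ (extT X x F)
  | .all x φ, X => IncForm.tsat φ (extAll X x)

/-- Free variables of an inclusion logic formula. -/
def IncForm.fv : IncForm M → Set ℕ
  | .fo α => FOForm.fv α
  | .incl xs ys => {v | v ∈ xs ∨ v ∈ ys}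
  | .and φ ψ => IncForm.fv φ ∪ IncForm.fv ψ
  | .or φ ψ => IncForm.fv φ ∪ IncForm.fv ψ
  | .ex x φ => IncForm.fv φ \ {x}
  | .all x φ => IncForm.fv φ \ {x}

/-- A block of existential quantifiers. -/
def IncForm.exs (l : List ℕ) (φ : IncForm M) : IncForm M := l.foldr IncForm.ex φ

/-- A block of universal quantifiers. -/
def IncForm.alls (l : List ℕ) (φ : IncForm M) : IncForm M := l.foldr IncForm.all φ

/-- The restriction `X ↾ V` of a team to a set of variables. -/
def restrictTeam (X : Team M) (V : Set ℕ) : Set (V → M) :=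
  (fun s => fun v : V => s v.1) '' X

def Agree (V : Set ℕ) (X Y : Team M) : Prop :=
  ∀ s ∈ X, ∃ t ∈ Y, Set.EqOn s t V

lemma agree_iff_restrictTeam_subset {V : Set ℕ} {X Y : Team M} :
    Agree V X Y ↔ restrictTeam X V ⊆ restrictTeam Y V := by
  constructor
  · rintro h _ ⟨s, hs, rfl⟩
    obtain ⟨t, ht, hst⟩ := h s hs
    exact ⟨t, ht, funext fun v => (hst v.2).symm⟩
  · intro h s hs
    obtain ⟨t, ht, hts⟩ := h ⟨s, hs, rfl⟩
    exact ⟨t, ht, fun v hv => (congrFun hts ⟨v, hv⟩).symm⟩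

lemma restrictTeam_eq_iff_agree {V : Set ℕ} {X Y : Team M} :
    restrictTeam X V = restrictTeam Y V ↔ Agree V X Y ∧ Agree V Y X := by
  rw [Set.Subset.antisymm_iff, agree_iff_restrictTeam_subset, agree_iff_restrictTeam_subset]

lemma eqOn_update_of_eqOn_diff {s t : ℕ → M} {V : Set ℕ} {x : ℕ}
    (h : Set.EqOn s t (V \ {x})) (a : M) :
    Set.EqOn (Function.update s x a) (Function.update t x a) V := by
  intro v hv
  by_cases hvx : v = x
  · subst hvx
    simp
  · simpa only [Function.update_of_ne hvx] using h ⟨hv, hvx⟩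

def agreeingPart (Y Z : Team M) (V : Set ℕ) : Team M :=
  {t ∈ Y | ∃ s ∈ Z, Set.EqOn s t V}

def transportChoice (X : Team M) (V : Set ℕ) (F : (ℕ → M) → Set M) (t : ℕ → M) : Set M :=
  {a | ∃ s ∈ X, Set.EqOn s t V ∧ a ∈ F s}

namespace Agree

variable {V W : Set ℕ} {X Y Z : Team M}

lemma mono (h : Agree V X Y) (hW : W ⊆ V) : Agree W X Y := fun s hs =>
  let ⟨t, ht, hst⟩ := h s hs
  ⟨t, ht, hst.mono hW⟩

lemma mono_left (h : Agree V X Y) (hZ : Z ⊆ X) : Agree V Z Y := fun s hs => h s (hZ hs)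

lemma extAll {x : ℕ} (h : Agree (V \ {x}) X Y) :
    Agree V (TeamSem.extAll X x) (TeamSem.extAll Y x) := by
  rintro _ ⟨s, hs, a, rfl⟩
  obtain ⟨t, ht, hst⟩ := h s hs
  exact ⟨_, ⟨t, ht, a, rfl⟩, eqOn_update_of_eqOn_diff hst a⟩

lemma agreeingPart (h : Agree V Z Y) : Agree V Z (agreeingPart Y Z V) := fun s hs =>
  let ⟨t, ht, hst⟩ := h s hs
  ⟨t, ⟨ht, s, hs, hst⟩, hst⟩

lemma transportChoice_nonempty {F : (ℕ → M) → Set M} (h : Agree V Y X)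
    (hF : ∀ s ∈ X, (F s).Nonempty) : ∀ t ∈ Y, (transportChoice X V F t).Nonempty := by
  intro t ht
  obtain ⟨s, hs, hts⟩ := h t ht
  obtain ⟨a, ha⟩ := hF s hs
  exact ⟨a, s, hs, hts.symm, ha⟩

lemma extT_transportChoice {x : ℕ} {F : (ℕ → M) → Set M} (h : Agree (V \ {x}) X Y) :
    Agree V (extT X x F) (extT Y x (transportChoice X (V \ {x}) F)) := by
  rintro _ ⟨s, hs, a, ha, rfl⟩
  obtain ⟨t, ht, hst⟩ := h s hs
  exact ⟨_, ⟨t, ht, a, ⟨s, hs, hst, ha⟩, rfl⟩, eqOn_update_of_eqOn_diff hst a⟩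

end Agree

lemma agree_agreeingPart (Y Z : Team M) (V : Set ℕ) : Agree V (agreeingPart Y Z V) Z := by
  rintro t ⟨-, s, hs, hst⟩
  exact ⟨s, hs, hst.symm⟩

lemma eq_agreeingPart_union {V W : Set ℕ} {Y Z₁ Z₂ : Team M}
    (h : Agree (V ∪ W) Y (Z₁ ∪ Z₂)) : Y = agreeingPart Y Z₁ V ∪ agreeingPart Y Z₂ W := by
  refine Set.Subset.antisymm (fun t ht => ?_)
    (Set.union_subset (fun _ ht => ht.1) fun _ ht => ht.1)
  obtain ⟨s, hs | hs, hts⟩ := h t ht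
  · exact Or.inl ⟨ht, s, hs, (hts.mono Set.subset_union_left).symm⟩
  · exact Or.inr ⟨ht, s, hs, (hts.mono Set.subset_union_right).symm⟩

lemma agree_extT_transportChoice (X Y : Team M) (V : Set ℕ) (x : ℕ)
    (F : (ℕ → M) → Set M) :
    Agree V (extT Y x (transportChoice X (V \ {x}) F)) (extT X x F) := by
  rintro _ ⟨t, -, a, ⟨s, hs, hst, ha⟩, rfl⟩
  exact ⟨_, ⟨s, hs, a, ha, rfl⟩, (eqOn_update_of_eqOn_diff hst a).symm⟩

lemma FOForm.sat_congr (α : FOForm M) {s t : ℕ → M} (h : Set.EqOn s t α.fv) :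
    α.sat s ↔ α.sat t := by
  induction α generalizing s t with
  | atom l p =>
    simp only [FOForm.sat, List.map_congr_left fun v hv => h hv]
  | neg φ ih => exact not_congr (ih h)
  | and φ ψ ih₁ ih₂ =>
    exact and_congr (ih₁ (h.mono Set.subset_union_left)) (ih₂ (h.mono Set.subset_union_right))
  | or φ ψ ih₁ ih₂ =>
    exact or_congr (ih₁ (h.mono Set.subset_union_left)) (ih₂ (h.mono Set.subset_union_right))
  | ex x φ ih => exact exists_congr fun a => ih (eqOn_update_of_eqOn_diff h a)
  | all x φ ih => exact forall_congr' fun a => ih (eqOn_update_of_eqOn_diff h a)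

lemma IncForm.tsat_of_agree (φ : IncForm M) {X Y : Team M} (hXY : Agree φ.fv X Y)
    (hYX : Agree φ.fv Y X) (hX : φ.tsat X) : φ.tsat Y := by
  induction φ generalizing X Y with
  | fo α =>
    intro t ht
    obtain ⟨s, hs, hts⟩ := hYX t ht
    exact (α.sat_congr hts).mpr (hX s hs)
  | incl xs ys =>
    intro t ht
    obtain ⟨s, hs, hts⟩ := hYX t ht
    obtain ⟨s', hs', hss'⟩ := hX s hs
    obtain ⟨t', ht', hs't'⟩ := hXY s' hs'
    refine ⟨t', ht', ?_⟩
    calc xs.map t = xs.map s := List.map_congr_left fun v hv => hts (Or.inl hv)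
      _ = ys.map s' := hss'
      _ = ys.map t' := List.map_congr_left fun v hv => hs't' (Or.inr hv)
  | and φ ψ ih₁ ih₂ =>
    exact ⟨ih₁ (hXY.mono Set.subset_union_left) (hYX.mono Set.subset_union_left) hX.1,
      ih₂ (hXY.mono Set.subset_union_right) (hYX.mono Set.subset_union_right) hX.2⟩
  | or φ ψ ih₁ ih₂ =>
    obtain ⟨X₁, X₂, rfl, hX₁, hX₂⟩ := hX
    refine ⟨agreeingPart Y X₁ φ.fv, agreeingPart Y X₂ ψ.fv, eq_agreeingPart_union hYX,
      ih₁ ?_ (agree_agreeingPart _ _ _) hX₁, ih₂ ?_ (agree_agreeingPart _ _ _) hX₂⟩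
    · exact ((hXY.mono Set.subset_union_left).mono_left Set.subset_union_left).agreeingPart
    · exact ((hXY.mono Set.subset_union_right).mono_left Set.subset_union_right).agreeingPart
  | ex x φ ih =>
    obtain ⟨F, hF, hφ⟩ := hX
    exact ⟨_, hYX.transportChoice_nonempty hF,
      ih hXY.extT_transportChoice (agree_extT_transportChoice X Y _ x F) hφ⟩
  | all x φ ih => exact ih hXY.extAll hYX.extAll hX

theorem locality (φ : IncForm M) (X Y : Team M)
    (h : restrictTeam X (IncForm.fv φ) = restrictTeam Y (IncForm.fv φ)) :
    IncForm.tsat φ X ↔ IncForm.tsat φ Y := by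
  obtain ⟨hXY, hYX⟩ := restrictTeam_eq_iff_agree.mp h
  exact ⟨φ.tsat_of_agree hXY hYX, φ.tsat_of_agree hYX hXY⟩

end TeamSem
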